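/- Assume Conditions (C) and set C = E[W³]/E[W]. Then for any sequence l = l_n with l = o(n), the weight at position l of the size-biased random order without replacement satisfies E[w_{v(l)}²] = C + o(1) as n → ∞. -/

import Mathlib

open MeasureTheory Filter Asymptotics
open scoped Classical ENNReal Topology

noncomputable section

/-- `ℓ_n`: the total weight. -/
def ell (w : ∀ n : ℕ, Fin n → ℝ) (n : ℕ) : ℝ := ∑ i, w n i

/-- Conditions (C) on the triangular array of weights, relative to the law `μ` of the
limiting random variable `W`. -/
structure CondC (w : ∀ n : ℕ, Fin n → ℝ) (μ : Measure ℝ) : Prop where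
  isProb : IsProbabilityMeasure μ
  pos : ∀ᵐ x ∂μ, 0 < x
  w_pos : ∀ n, ∀ i : Fin n, 0 < w n i
  w_anti : ∀ n, ∀ i j : Fin n, i ≤ j → w n j ≤ w n i
  int3 : Integrable (fun x => x ^ 3) μ
  moment_eq : ∫ x, x ^ 2 ∂μ = ∫ x, x ∂μ
  weak : ∀ g : BoundedContinuousFunction ℝ ℝ,
    Tendsto (fun n : ℕ => (∑ i : Fin n, g (w n i)) / (n : ℝ)) atTop (𝓝 (∫ x, g x ∂μ))
  ell_asymp : (fun n : ℕ => ell w n - (∫ x, x ∂μ) * (n : ℝ)) =o[atTop]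
      fun n : ℕ => (n : ℝ) ^ ((2 : ℝ) / 3)
  sq_asymp : (fun n : ℕ => (∑ i : Fin n, (w n i) ^ 2) - (∫ x, x ^ 2 ∂μ) * (n : ℝ)) =o[atTop]
      fun n : ℕ => (n : ℝ) ^ ((2 : ℝ) / 3)
  cube_asymp : (fun n : ℕ => (∑ i : Fin n, (w n i) ^ 3) - (∫ x, x ^ 3 ∂μ) * (n : ℝ)) =o[atTop]
      fun _ : ℕ => (1 : ℝ)
  max_asymp : (fun n : ℕ => ⨆ i : Fin n, w n i) =o[atTop] fun n : ℕ => (n : ℝ) ^ ((1 : ℝ) / 3)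

/-- The constant `C = E[W³]/E[W]`. -/
def Cconst (μ : Measure ℝ) : ℝ := (∫ x, x ^ 3 ∂μ) / (∫ x, x ∂μ)

/-- The critical percolation parameter `p_f = (ℓ_n^{1/3} + f_n)/ℓ_n^{4/3}`. -/
def pf (w : ∀ n : ℕ, Fin n → ℝ) (f : ℕ → ℝ) (n : ℕ) : ℝ :=
  (ell w n ^ ((1 : ℝ) / 3) + f n) / ell w n ^ ((4 : ℝ) / 3)

/-- A Bernoulli-type measure on `Bool` with parameter `p`. -/
def bern (p : ℝ) : Measure Bool :=
  ENNReal.ofReal (1 - p) • Measure.dirac false + ENNReal.ofReal p • Measure.dirac true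

/-- The law of the independent edge indicators of the rank-1 inhomogeneous random graph
`G(W,p)`: the indicator attached to the (ordered) pair `(i,j)` is Bernoulli with success
probability `1 - exp (- w i * w j * p)`, all independent. -/
def graphMeasure (n : ℕ) (wn : Fin n → ℝ) (p : ℝ) : Measure (Fin n → Fin n → Bool) :=
  Measure.pi fun i => Measure.pi fun j => bern (1 - Real.exp (-(wn i * wn j * p)))

/-- The simple graph built from a sample of edge indicators: `i ~ j` iff `i ≠ j` and the
indicator of the pair `(min i j, max i j)` is `true`. -/
def graphOf {n : ℕ} (ω : Fin n → Fin n → Bool) : SimpleGraph (Fin n) :=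
  SimpleGraph.fromRel fun i j => ω (min i j) (max i j) = true

/-- The size (number of vertices) of a connected component. -/
def csize {n : ℕ} (G : SimpleGraph (Fin n)) (c : G.ConnectedComponent) : ℕ :=
  Nat.card {v : Fin n // G.connectedComponentMk v = c}

/-- The weight of a connected component: sum of the weights of its vertices. -/
def cweight {n : ℕ} (wn : Fin n → ℝ) (G : SimpleGraph (Fin n)) (c : G.ConnectedComponent) : ℝ :=
  ∑ v : Fin n, if G.connectedComponentMk v = c then wn v else 0

/-- The number of edges of a connected component. -/
def cedges {n : ℕ} (G : SimpleGraph (Fin n)) (c : G.ConnectedComponent) : ℕ :=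
  Nat.card {e : Sym2 (Fin n) // e ∈ G.edgeSet ∧ ∀ v ∈ e, G.connectedComponentMk v = c}

/-- The surplus (excess) of a connected component: edges − vertices + 1. -/
def csurplus {n : ℕ} (G : SimpleGraph (Fin n)) (c : G.ConnectedComponent) : ℤ :=
  (cedges G c : ℤ) - (csize G c : ℤ) + 1

/-- `c` is a largest connected component. -/
def isLargest {n : ℕ} (G : SimpleGraph (Fin n)) (c : G.ConnectedComponent) : Prop :=
  ∀ c', csize G c' ≤ csize G c

/-- The finset of connected components of a graph on `Fin n`. -/
def comps {n : ℕ} (G : SimpleGraph (Fin n)) : Finset G.ConnectedComponent :=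
  Finset.univ.image G.connectedComponentMk

/-- The law of the size-biased random order without replacement `(v(1),…,v(n))`, seen as a
measure on functions `Fin n → Fin n` (supported on permutations `σ`, with
`P(v = σ) = ∏_i w (σ i) / (ℓ_n − ∑_{k<i} w (σ k))`). -/
def sbMeasure (n : ℕ) (wn : Fin n → ℝ) : Measure (Fin n → Fin n) :=
  Measure.sum fun σ : Equiv.Perm (Fin n) =>
    ENNReal.ofReal (∏ i : Fin n,
        wn (σ i) / ((∑ k, wn k) - ∑ k ∈ Finset.univ.filter fun k => k < i, wn (σ k))) •
      Measure.dirac ⇑σ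

/-- The joint law of (edge indicators of `G(W,p)`, size-biased order), the two being
independent. -/
def expMeasure' (n : ℕ) (wn : Fin n → ℝ) (p : ℝ) :
    Measure ((Fin n → Fin n → Bool) × (Fin n → Fin n)) :=
  Measure.sum fun σ : Equiv.Perm (Fin n) =>
    ENNReal.ofReal (∏ i : Fin n,
        wn (σ i) / ((∑ k, wn k) - ∑ k ∈ Finset.univ.filter fun k => k < i, wn (σ k))) •
      (graphMeasure n wn p).map fun g => (g, ⇑σ)

/-- `sbW wn vord k` is `w_{v(k)}` (1-based), with the conventions `w_{v(0)} = 0` and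
`w_{v(k)} = 0` for `k > n`. -/
def sbW {n : ℕ} (wn : Fin n → ℝ) (vord : Fin n → Fin n) (k : ℕ) : ℝ :=
  if h : k - 1 < n then (if k = 0 then 0 else wn (vord ⟨k - 1, h⟩)) else 0

/-- The (0-based) first position, in the order `vord`, of a vertex of the component `c`;
this governs the order in which components are discovered by the breadth-first walk. -/
def firstIdx {n : ℕ} (G : SimpleGraph (Fin n)) (vord : Fin n → Fin n)
    (c : G.ConnectedComponent) : ℕ :=
  sInf {i : ℕ | ∃ h : i < n, G.connectedComponentMk (vord ⟨i, h⟩) = c}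

/-- The number of vertices explored strictly before the exploration of the component `c`
starts: components are explored in the order of their first appearance in `vord`, and the
exploration of `c` occupies the steps `startT c + 1, …, startT c + csize c`. -/
def startT {n : ℕ} (G : SimpleGraph (Fin n)) (vord : Fin n → Fin n)
    (c : G.ConnectedComponent) : ℕ :=
  ∑ v : Fin n, if firstIdx G vord (G.connectedComponentMk v) < firstIdx G vord c then 1 else 0

/-- The state (explored vertices, queue of discovered-but-unexplored vertices) of the
breadth-first walk after `i` steps; roots are chosen as the first undiscovered vertex in the
order `vord`, and children are queued in the order `vord`. -/
def bfwQueue {n : ℕ} (G : SimpleGraph (Fin n)) (vord : Fin n → Fin n) :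
    ℕ → Finset (Fin n) × List (Fin n)
  | 0 => (∅, [])
  | i + 1 =>
    let s := bfwQueue G vord i
    let q : List (Fin n) :=
      if s.2.isEmpty then ((List.ofFn vord).filter fun v => decide (v ∉ s.1)).take 1 else s.2
    match q with
    | [] => (s.1, [])
    | v :: rest =>
      (insert v s.1,
        rest ++ (List.ofFn vord).filter fun u => decide (G.Adj v u ∧ u ∉ s.1 ∧ u ∉ q))

/-- The reflected exploration process `L` of the breadth-first walk:
`L_0 = 1`, `L_{i+1} = max (L_i + c(i+1) - 1) 1`. -/
def Lproc {n : ℕ} (G : SimpleGraph (Fin n)) (vord : Fin n → Fin n) (i : ℕ) : ℕ :=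
  max (bfwQueue G vord i).2.length 1

/-- `discNbrs G vord i` is the number of neighbours of `v(i+1)` (0-based: `vord i`) outside
`{v(1),…,v(i+1)}`, i.e. the increment `X⁰_{i+1} + 1` of the process `L⁰`. -/
def discNbrs {n : ℕ} (G : SimpleGraph (Fin n)) (vord : Fin n → Fin n) (i : ℕ) : ℕ :=
  Nat.card {j : Fin n // (∃ h : i < n, G.Adj (vord ⟨i, h⟩) j) ∧
    ∀ k : ℕ, ∀ hk : k < n, k ≤ i → vord ⟨k, hk⟩ ≠ j}

/-- The process `L⁰`: `L⁰_0 = 1`, `L⁰_{i+1} = L⁰_i + X⁰_{i+1}` where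
`X⁰_{i+1} = ∑_{j ∉ {v(1),…,v(i+1)}} Y(v(i+1), j) − 1`. -/
def L0 {n : ℕ} (G : SimpleGraph (Fin n)) (vord : Fin n → Fin n) (m : ℕ) : ℤ :=
  1 - (m : ℤ) + ∑ i ∈ Finset.range m, (discNbrs G vord i : ℤ)

/-- The deterministic-drift process `L̃^h`, defined by
`L̃^h_m + m − 1 = ∑_{i=1}^m ∑_{k > i+h} (1 − exp (−w_{v(i)} w_{v(k)} p))`,
the inner sum being over positions `k ≤ n` in the size-biased order. -/
def Ltilde {n : ℕ} (wn : Fin n → ℝ) (p : ℝ) (vord : Fin n → Fin n) (h m : ℕ) : ℝ :=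
  1 - (m : ℝ) + ∑ i ∈ Finset.range m,
    if hi : i < n then
      ∑ k : Fin n, if i + h < (k : ℕ) then
        1 - Real.exp (-(wn (vord ⟨i, hi⟩) * wn (vord k) * p)) else 0
    else 0

/-- The law of the independent exponential clocks `(T_k)_{k ≤ n}`, `T_k` of rate `w_k / ℓ_n`. -/
def clocksMeasure (n : ℕ) (wn : Fin n → ℝ) : Measure (Fin n → ℝ) :=
  Measure.pi fun k => ProbabilityTheory.expMeasure (wn k / ∑ i, wn i)

/-- `N(x)`: the number of clocks that have rung by time `x`. -/
def Nclock {n : ℕ} (x : ℝ) (ω : Fin n → ℝ) : ℕ :=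
  ∑ k : Fin n, if ω k ≤ x then 1 else 0

/-- `X(x)`: the total weight of the clocks that have rung by time `x`. -/
def Xclock {n : ℕ} (wn : Fin n → ℝ) (x : ℝ) (ω : Fin n → ℝ) : ℝ :=
  ∑ k : Fin n, if ω k ≤ x then wn k else 0

/-- Conditions (C2) on a pair of sequences `(a, b)`, relative to the constant `Ā`. -/
structure Cond2 (w : ∀ n : ℕ, Fin n → ℝ) (Abar : ℝ) (a b : ℕ → ℝ) : Prop where
  exp_lt : ∀ᶠ n : ℕ in atTop,
    Real.exp (-(b n) ^ 2 / (Abar * (b n * (n : ℝ) ^ ((1 : ℝ) / 3) + a n))) < 1 / 4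
  a_top : Tendsto a atTop atTop
  b_top : Tendsto b atTop atTop
  a_lito : a =o[atTop] fun n : ℕ => (n : ℝ)
  b_bigO : b =O[atTop] a
  a_bigO : a =O[atTop] fun n => b n * ell w n ^ ((1 : ℝ) / 3)
  a_sq_bigO : (fun n => a n ^ 2) =O[atTop] fun n => b n * ell w n

/-- Conditions (C3) on a quadruple of sequences `(a, b, c, d)`. -/
structure Cond3 (w : ∀ n : ℕ, Fin n → ℝ) (Abar : ℝ) (a b c d : ℕ → ℝ) : Prop where
  sum_lito : (fun n => a n + c n) =o[atTop] fun n : ℕ => (n : ℝ)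
  diff_top : Tendsto (fun n => a n - b n) atTop atTop
  d_bigO : d =O[atTop] fun n => a n - b n
  c2 : Cond2 w Abar (fun n => Real.sqrt ((a n - b n) * (a n + c n))) d

/-- The list of component sizes, sorted in decreasing order. -/
def sizesList {n : ℕ} (G : SimpleGraph (Fin n)) : List ℕ :=
  (((comps G).val.map fun c => csize G c).sort (· ≤ ·)).reverse

/-- `kthSize G k` is the size of the `(k+1)`-st largest connected component of `G`
(`0` if there is no such component). -/
def kthSize {n : ℕ} (G : SimpleGraph (Fin n)) (k : ℕ) : ℕ := (sizesList G).getD k 0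

end

/-!
Conditionally on the first `l - 1` draws, `v(l)` is a size-biased pick from the set `t` of
items not yet drawn, so its conditional mean square weight is `∑_{i ∈ t} w_i³ / ∑_{i ∈ t} w_i`.
The complement of `t` has only `l - 1 = o(n)` elements, so its total weight is `o(n)` by
Cauchy–Schwarz (the second moments are `O(n)`), and its total cubed weight is `o(n)` because
weak convergence together with convergence of the third moments makes the cubes uniformly
integrable. The conditional mean is therefore squeezed between `(∑ w³ - o(n)) / ℓ_n` and
`∑ w³ / (ℓ_n - o(n))`, and both bounds tend to `E[W³] / E[W]`.
-/

open Finset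

namespace SizeBiased

section Orderings

variable {α : Type*}

def orderings (s : Finset α) : Finset (List α) :=
  ⟨s.val.lists, Multiset.lists_nodup_finset s⟩

lemma mem_orderings {s : Finset α} {L : List α} : L ∈ orderings s ↔ s.val = L := by
  simp [orderings]

lemma nil_mem_orderings_iff {s : Finset α} : [] ∈ orderings s ↔ s = ∅ := by
  simp [mem_orderings, ← Finset.val_eq_zero]

lemma orderings_empty : orderings (∅ : Finset α) = {[]} := by
  ext L
  simp [mem_orderings, eq_comm]

lemma card_orderings (s : Finset α) : #(orderings s) = (#s).factorial := by
  rw [orderings, Finset.card_mk, ← Finset.coe_toList s, Multiset.lists_coe, Multiset.coe_card,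
    List.length_permutations, Finset.length_toList]

variable [DecidableEq α]

lemma cons_mem_orderings_iff {s : Finset α} {a : α} {L : List α} :
    a :: L ∈ orderings s ↔ a ∈ s ∧ L ∈ orderings (s.erase a) := by
  rw [mem_orderings, mem_orderings, ← Multiset.cons_coe, Finset.erase_val, ← Finset.mem_val]
  constructor
  · intro h
    rw [h]
    exact ⟨Multiset.mem_cons_self _ _, Multiset.erase_cons_head _ _⟩
  · rintro ⟨ha, h⟩
    rw [← h, Multiset.cons_erase ha]

lemma sum_orderings_eq_sum_cons {M : Type*} [AddCommMonoid M] {s : Finset α}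
    (hs : s.Nonempty) (F : List α → M) :
    ∑ L ∈ orderings s, F L = ∑ a ∈ s, ∑ L ∈ orderings (s.erase a), F (a :: L) := by
  rw [Finset.sum_sigma']
  symm
  refine Finset.sum_bij (fun p _ => p.1 :: p.2) ?_ ?_ ?_ (fun _ _ => rfl)
  · rintro ⟨a, L⟩ h
    exact cons_mem_orderings_iff.2 (Finset.mem_sigma.1 h)
  · rintro ⟨a, L⟩ _ ⟨b, T⟩ _ h
    obtain ⟨rfl, rfl⟩ := List.cons.inj h
    rfl
  · rintro (_ | ⟨a, L⟩) h
    · exact absurd (nil_mem_orderings_iff.1 h) hs.ne_empty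
    · exact ⟨⟨a, L⟩, Finset.mem_sigma.2 (cons_mem_orderings_iff.1 h), rfl⟩

end Orderings

section SizeBiasedProb

variable {α : Type*}

/-- The probability that drawing without replacement, each time with probability proportional
to `w`, from a pool of total weight `ℓ` starts with the list `L`. -/
noncomputable def sbProb (w : α → ℝ) : ℝ → List α → ℝ
  | _, [] => 1
  | ℓ, a :: L => w a / ℓ * sbProb w (ℓ - w a) L

lemma sbProb_ofFn {n : ℕ} (w : α → ℝ) (ℓ : ℝ) (f : Fin n → α) :
    sbProb w ℓ (List.ofFn f) = ∏ i, w (f i) / (ℓ - ∑ k ∈ univ.filter (· < i), w (f k)) := by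
  induction n generalizing ℓ with
  | zero => simp [sbProb]
  | succ n ih =>
    rw [List.ofFn_succ, sbProb, ih, Fin.prod_univ_succ]
    congr 1
    · simp
    · refine Finset.prod_congr rfl fun i _ => ?_
      rw [Finset.sum_filter, Finset.sum_filter, Fin.sum_univ_succ, if_pos (Fin.succ_pos i)]
      simp only [Fin.succ_lt_succ_iff]
      ring

variable [DecidableEq α]

lemma sbProb_cons_of_mem (w : α → ℝ) {s : Finset α} {a : α} (ha : a ∈ s) (L : List α) :
    sbProb w (∑ b ∈ s, w b) (a :: L)
      = w a / (∑ b ∈ s, w b) * sbProb w (∑ b ∈ s.erase a, w b) L := by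
  rw [sbProb, Finset.sum_erase_eq_sub ha]

lemma sbProb_nonneg {w : α → ℝ} {s : Finset α} (hw : ∀ a ∈ s, 0 ≤ w a) {L : List α}
    (hL : L ∈ orderings s) : 0 ≤ sbProb w (∑ a ∈ s, w a) L := by
  induction L generalizing s with
  | nil => exact zero_le_one
  | cons a L ih =>
    obtain ⟨ha, hL⟩ := cons_mem_orderings_iff.1 hL
    rw [sbProb_cons_of_mem w ha]
    exact mul_nonneg (div_nonneg (hw a ha) (Finset.sum_nonneg hw))
      (ih (fun b hb => hw b (Finset.mem_of_mem_erase hb)) hL)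

lemma sum_sbProb_cons_mul {w : α → ℝ} {s : Finset α} {a : α} (ha : a ∈ s)
    (F : List α → ℝ) :
    ∑ L ∈ orderings (s.erase a), sbProb w (∑ b ∈ s, w b) (a :: L) * F L
      = w a / (∑ b ∈ s, w b) *
          ∑ L ∈ orderings (s.erase a), sbProb w (∑ b ∈ s.erase a, w b) L * F L := by
  simp_rw [sbProb_cons_of_mem w ha, Finset.mul_sum, mul_assoc]

lemma sum_sbProb_orderings_eq_one {w : α → ℝ} {s : Finset α} (hw : ∀ a ∈ s, 0 < w a) :
    ∑ L ∈ orderings s, sbProb w (∑ a ∈ s, w a) L = 1 := by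
  induction s using Finset.strongInduction with
  | _ s ih =>
    rcases s.eq_empty_or_nonempty with rfl | hs
    · simp [orderings_empty, sbProb]
    rw [sum_orderings_eq_sum_cons hs]
    calc ∑ a ∈ s, ∑ L ∈ orderings (s.erase a), sbProb w (∑ b ∈ s, w b) (a :: L)
        = ∑ a ∈ s, w a / ∑ b ∈ s, w b := by
          refine Finset.sum_congr rfl fun a ha => ?_
          simpa [ih _ (Finset.erase_ssubset ha) fun b hb => hw b (Finset.mem_of_mem_erase hb)]
            using sum_sbProb_cons_mul (w := w) ha fun _ => 1
      _ = 1 := by rw [← Finset.sum_div, div_self (Finset.sum_pos hw hs).ne']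

/-- Conditionally on the first `m` draws, the `(m + 1)`-st one is a size-biased pick from the
set `t` of the remaining items; so the mean of `g` at that draw is a mixture of the averages
`∑_{a ∈ t} w a * g a / ∑_{a ∈ t} w a`, and lies in every convex set containing all of them. -/
lemma sum_sbProb_mul_getD_mem {S : Set ℝ} (hS : Convex ℝ S) {w : α → ℝ} (g : α → ℝ)
    {m : ℕ} {s : Finset α} (hm : m < #s) (hw : ∀ a ∈ s, 0 < w a)
    (hg : ∀ t ⊆ s, #t + m = #s → (∑ a ∈ t, w a * g a) / ∑ a ∈ t, w a ∈ S) :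
    ∑ L ∈ orderings s, sbProb w (∑ a ∈ s, w a) L * (L.map g).getD m 0 ∈ S := by
  have hs : s.Nonempty := Finset.card_pos.1 (by omega)
  rw [sum_orderings_eq_sum_cons hs]
  induction m generalizing s with
  | zero =>
    convert hg s subset_rfl (by simp) using 1
    rw [Finset.sum_div]
    refine Finset.sum_congr rfl fun a ha => ?_
    simp only [List.map_cons, List.getD_cons_zero]
    rw [sum_sbProb_cons_mul ha fun _ => g a, ← Finset.sum_mul,
      sum_sbProb_orderings_eq_one fun b hb => hw b (Finset.mem_of_mem_erase hb)]
    ring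
  | succ m ih =>
    have hW : 0 < ∑ a ∈ s, w a := Finset.sum_pos hw hs
    simp only [List.map_cons, List.getD_cons_succ]
    rw [Finset.sum_congr rfl fun a ha => sum_sbProb_cons_mul ha fun L => (L.map g).getD m 0]
    refine hS.sum_mem (fun a ha => div_nonneg (hw a ha).le hW.le) ?_ fun a ha => ?_
    · rw [← Finset.sum_div, div_self hW.ne']
    · have hcard : #(s.erase a) + 1 = #s := Finset.card_erase_add_one ha
      have hsa : (s.erase a).Nonempty := Finset.card_pos.1 (by omega)
      rw [sum_orderings_eq_sum_cons hsa]
      exact ih (by omega) (fun b hb => hw b (Finset.mem_of_mem_erase hb))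
        (fun t ht htc => hg t (ht.trans (Finset.erase_subset a s)) (by omega)) hsa

end SizeBiasedProb

lemma ofFn_mem_orderings_univ {n : ℕ} (σ : Equiv.Perm (Fin n)) :
    List.ofFn σ ∈ orderings (univ : Finset (Fin n)) := by
  rw [mem_orderings, ← Fin.univ_val_map, Multiset.map_univ_val_equiv]

lemma sum_perm_ofFn_eq_sum_orderings {M : Type*} [AddCommMonoid M] {n : ℕ}
    (F : List (Fin n) → M) :
    ∑ σ : Equiv.Perm (Fin n), F (List.ofFn σ) = ∑ L ∈ orderings univ, F L := by
  have hinj : Set.InjOn (fun σ : Equiv.Perm (Fin n) => List.ofFn σ)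
      ↑(univ : Finset (Equiv.Perm (Fin n))) :=
    fun σ _ τ _ h => Equiv.coe_fn_injective (List.ofFn_injective h)
  refine Finset.sum_nbij _ (fun σ _ => ofFn_mem_orderings_univ σ) hinj
    (Finset.surjOn_of_injOn_of_card_le _ (fun σ _ => ofFn_mem_orderings_univ σ) hinj ?_)
    fun _ _ => rfl
  simp [card_orderings, Fintype.card_perm]

lemma integral_sbMeasure_eq_sum {n : ℕ} {wn : Fin n → ℝ} (hw : ∀ i, 0 ≤ wn i)
    (f : (Fin n → Fin n) → ℝ) :
    ∫ ω, f ω ∂sbMeasure n wn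
      = ∑ σ : Equiv.Perm (Fin n), sbProb wn (∑ k, wn k) (List.ofFn σ) * f σ := by
  rw [sbMeasure, Measure.sum_fintype, integral_finsetSum_measure fun σ _ =>
    Integrable.of_finite.smul_measure ENNReal.ofReal_ne_top]
  refine Finset.sum_congr rfl fun σ _ => ?_
  have hP := sbProb_nonneg (fun i _ => hw i) (ofFn_mem_orderings_univ σ)
  rw [sbProb_ofFn] at hP
  rw [integral_smul_measure, integral_dirac, ENNReal.toReal_ofReal hP, smul_eq_mul, sbProb_ofFn]

lemma sbW_sq_eq_getD {n : ℕ} (wn : Fin n → ℝ) (ω : Fin n → Fin n) {k : ℕ} (hk : k ≠ 0) :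
    sbW wn ω k ^ 2 = ((List.ofFn ω).map fun j => wn j ^ 2).getD (k - 1) 0 := by
  rw [sbW, List.getD_eq_getElem?_getD]
  split_ifs with h <;> simp [h]

section MaxSubsetSum

variable {ι : Type*}

noncomputable def maxSubsetSum (f : ι → ℝ) (k : ℕ) : ℝ :=
  ⨆ A : {A : Finset ι // #A ≤ k}, ∑ i ∈ A.1, f i

lemma maxSubsetSum_le {f : ι → ℝ} {k : ℕ} {B : ℝ}
    (h : ∀ A : Finset ι, #A ≤ k → ∑ i ∈ A, f i ≤ B) : maxSubsetSum f k ≤ B :=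
  have : Nonempty {A : Finset ι // #A ≤ k} := ⟨⟨∅, Nat.zero_le k⟩⟩
  ciSup_le fun A => h A.1 A.2

variable [Fintype ι]

lemma sum_le_maxSubsetSum (f : ι → ℝ) {k : ℕ} {A : Finset ι} (hA : #A ≤ k) :
    ∑ i ∈ A, f i ≤ maxSubsetSum f k :=
  le_ciSup (f := fun A : {A : Finset ι // #A ≤ k} => ∑ i ∈ A.1, f i)
    (Finite.bddAbove_range _) ⟨A, hA⟩

lemma maxSubsetSum_nonneg (f : ι → ℝ) (k : ℕ) : 0 ≤ maxSubsetSum f k := by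
  simpa using sum_le_maxSubsetSum f (A := ∅) (Nat.zero_le k)

variable [DecidableEq ι]

lemma sub_div_sum_le_sum_div_sum {f w : ι → ℝ} {t : Finset ι} {D : ℝ} (hf : ∀ i, 0 ≤ f i)
    (hw : ∀ i, 0 ≤ w i) (ht : 0 < ∑ i ∈ t, w i) (hD : ∑ i ∈ tᶜ, f i ≤ D) :
    (∑ i, f i - D) / ∑ i, w i ≤ (∑ i ∈ t, f i) / ∑ i ∈ t, w i := by
  have hf_split := Finset.sum_add_sum_compl t f
  have hw_split := Finset.sum_add_sum_compl t w
  have hw_compl : 0 ≤ ∑ i ∈ tᶜ, w i := Finset.sum_nonneg fun i _ => hw i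
  exact div_le_div₀ (Finset.sum_nonneg fun i _ => hf i) (by linarith) ht (by linarith)

lemma sum_div_sum_le_div_sub_sum {f w : ι → ℝ} {t : Finset ι} {S : ℝ} (hf : ∀ i, 0 ≤ f i)
    (hS : ∑ i ∈ tᶜ, w i ≤ S) (hpos : 0 < ∑ i, w i - S) :
    (∑ i ∈ t, f i) / ∑ i ∈ t, w i ≤ (∑ i, f i) / (∑ i, w i - S) := by
  have hw_split := Finset.sum_add_sum_compl t w
  exact div_le_div₀ (Finset.sum_nonneg fun i _ => hf i)
    (Finset.sum_le_univ_sum_of_nonneg hf) hpos (by linarith)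

end MaxSubsetSum

lemma integral_sbW_sq_mem_Icc {n : ℕ} {wn : Fin n → ℝ} (hw : ∀ i, 0 < wn i) {k : ℕ}
    (hk : 1 ≤ k) (hkn : k ≤ n) (hpos : 0 < ∑ i, wn i - maxSubsetSum wn (k - 1)) :
    ∫ ω, sbW wn ω k ^ 2 ∂sbMeasure n wn ∈
      Set.Icc ((∑ i, wn i ^ 3 - maxSubsetSum (fun i => wn i ^ 3) (k - 1)) / ∑ i, wn i)
        ((∑ i, wn i ^ 3) / (∑ i, wn i - maxSubsetSum wn (k - 1))) := by
  simp_rw [integral_sbMeasure_eq_sum (fun i => (hw i).le), sbW_sq_eq_getD wn _ (by omega : k ≠ 0)]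
  rw [sum_perm_ofFn_eq_sum_orderings
    (fun L => sbProb wn (∑ k, wn k) L * (L.map fun j => wn j ^ 2).getD (k - 1) 0)]
  refine sum_sbProb_mul_getD_mem (convex_Icc _ _) _ (by simp; omega) (fun i _ => hw i) ?_
  intro t _ ht
  rw [card_univ, Fintype.card_fin] at ht
  have hcompl : #tᶜ ≤ k - 1 := by rw [card_compl, Fintype.card_fin]; omega
  have ht_pos : 0 < ∑ i ∈ t, wn i :=
    Finset.sum_pos (fun i _ => hw i) (Finset.card_pos.1 (by omega))
  have hcube : ∀ i, 0 ≤ wn i ^ 3 := fun i => (pow_pos (hw i) 3).le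
  simp_rw [← pow_succ']
  exact ⟨sub_div_sum_le_sum_div_sum hcube (fun i => (hw i).le) ht_pos
      (sum_le_maxSubsetSum _ hcompl),
    sum_div_sum_le_div_sub_sum hcube (sum_le_maxSubsetSum _ hcompl) hpos⟩

section Asymptotics

lemma tendsto_div_natCast_of_isLittleO {F : ℕ → ℝ} {c : ℝ}
    (h : (fun n => F n - c * n) =o[atTop] fun n => (n : ℝ)) :
    Tendsto (fun n => F n / n) atTop (𝓝 c) := by
  have h0 := h.tendsto_div_nhds_zero.add_const c
  rw [zero_add] at h0
  refine h0.congr' ?_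
  filter_upwards [eventually_ne_atTop 0] with n hn
  field_simp
  ring

lemma natCast_rpow_isBigO_natCast {p : ℝ} (hp : p ≤ 1) :
    (fun n : ℕ => (n : ℝ) ^ p) =O[atTop] fun n => (n : ℝ) := by
  refine IsBigO.of_bound 1 ?_
  filter_upwards [eventually_ge_atTop 1] with n hn
  have hn' : (1 : ℝ) ≤ n := by exact_mod_cast hn
  rw [one_mul, Real.norm_of_nonneg (by positivity), Real.norm_of_nonneg (by positivity)]
  simpa using Real.rpow_le_rpow_of_exponent_le hn' hp

lemma one_isLittleO_natCast : (fun _ : ℕ => (1 : ℝ)) =o[atTop] fun n => (n : ℝ) :=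
  (isLittleO_one_left_iff ℝ).2 (tendsto_norm_atTop_atTop.comp tendsto_natCast_atTop_atTop)

lemma tendsto_div_of_tendsto_div_natCast {a b : ℕ → ℝ} {A B : ℝ}
    (ha : Tendsto (fun n => a n / n) atTop (𝓝 A)) (hb : Tendsto (fun n => b n / n) atTop (𝓝 B))
    (hB : B ≠ 0) : Tendsto (fun n => a n / b n) atTop (𝓝 (A / B)) := by
  refine (ha.div hb hB).congr' ?_
  filter_upwards [eventually_ne_atTop 0] with n hn
  exact div_div_div_cancel_right₀ (Nat.cast_ne_zero.2 hn) _ _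

lemma tendsto_maxSubsetSum_div_of_sum_sq {x : ∀ n, Fin n → ℝ} {k : ℕ → ℕ} {c : ℝ}
    (hk : Tendsto (fun n => (k n : ℝ) / n) atTop (𝓝 0))
    (hx : Tendsto (fun n => (∑ i, x n i ^ 2) / n) atTop (𝓝 c)) :
    Tendsto (fun n => maxSubsetSum (x n) (k n) / n) atTop (𝓝 0) := by
  have hbound : ∀ n, maxSubsetSum (x n) (k n) ≤ √(k n * ∑ i, x n i ^ 2) := by
    refine fun n => maxSubsetSum_le fun A hA => (le_abs_self _).trans (Real.abs_le_sqrt ?_)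
    calc (∑ i ∈ A, x n i) ^ 2 ≤ (#A : ℝ) * ∑ i ∈ A, x n i ^ 2 := sq_sum_le_card_mul_sum_sq
      _ ≤ (k n : ℝ) * ∑ i, x n i ^ 2 := by
        gcongr
        exact Finset.subset_univ A
  have hlim : Tendsto (fun n => √((k n / n) * ((∑ i, x n i ^ 2) / n))) atTop (𝓝 0) := by
    simpa using (hk.mul hx).sqrt
  refine squeeze_zero (fun n => div_nonneg (maxSubsetSum_nonneg _ _) n.cast_nonneg)
    (fun n => ?_) hlim
  rw [div_mul_div_comm, Real.sqrt_div' _ (mul_self_nonneg _), Real.sqrt_mul_self n.cast_nonneg]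
  exact div_le_div_of_nonneg_right (hbound n) n.cast_nonneg

noncomputable def truncate (g : ℝ → ℝ) (hg : Continuous g) (T : ℕ) :
    BoundedContinuousFunction ℝ ℝ :=
  BoundedContinuousFunction.ofNormedAddCommGroup (fun y => max 0 (min (g y) T)) (by fun_prop) T
    fun y => by
      rw [Real.norm_of_nonneg (le_max_left _ _)]
      exact max_le T.cast_nonneg (min_le_right _ _)

lemma truncate_apply {g : ℝ → ℝ} {hg : Continuous g} (T : ℕ) (y : ℝ) :
    truncate g hg T y = max 0 (min (g y) T) :=
  rfl

lemma truncate_le_natCast {g : ℝ → ℝ} {hg : Continuous g} (T : ℕ) (y : ℝ) :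
    truncate g hg T y ≤ T :=
  max_le T.cast_nonneg (min_le_right _ _)

lemma truncate_le_self {g : ℝ → ℝ} {hg : Continuous g} {y : ℝ} (hy : 0 ≤ g y) (T : ℕ) :
    truncate g hg T y ≤ g y :=
  max_le hy (min_le_left _ _)

lemma tendsto_integral_truncate {g : ℝ → ℝ} (hg : Continuous g) {μ : Measure ℝ}
    (hgi : Integrable g μ) (hgμ : 0 ≤ᵐ[μ] g) :
    Tendsto (fun T : ℕ => ∫ y, truncate g hg T y ∂μ) atTop (𝓝 (∫ y, g y ∂μ)) := by
  refine tendsto_integral_of_dominated_convergence (fun y => |g y|)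
    (fun T => (truncate g hg T).continuous.aestronglyMeasurable) hgi.abs
    (fun T => Eventually.of_forall fun y => ?_) ?_
  · rw [truncate_apply, Real.norm_of_nonneg (le_max_left _ _)]
    exact max_le (abs_nonneg _) ((min_le_left _ _).trans (le_abs_self _))
  · filter_upwards [hgμ] with y hy
    refine tendsto_const_nhds.congr' ?_
    filter_upwards [eventually_ge_atTop ⌈g y⌉₊] with T hT
    rw [truncate_apply, min_eq_left ((Nat.le_ceil _).trans (Nat.cast_le.2 hT)),
      max_eq_right (show 0 ≤ g y from hy)]

/-- Truncate `g` at level `T`: the `k n` largest truncated terms contribute at most `k n * T`,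
and the total excess of `g` over its truncation is `n (∫ g - ∫ truncate g T + o(1))`, which is a
small multiple of `n` once `T` is large. -/
lemma tendsto_maxSubsetSum_div_of_weak {g : ℝ → ℝ} {μ : Measure ℝ} {x : ∀ n, Fin n → ℝ}
    {k : ℕ → ℕ} (hg : Continuous g) (hgx : ∀ n i, 0 ≤ g (x n i)) (hgμ : 0 ≤ᵐ[μ] g)
    (hgi : Integrable g μ)
    (hweak : ∀ h : BoundedContinuousFunction ℝ ℝ,
      Tendsto (fun n => (∑ i, h (x n i)) / n) atTop (𝓝 (∫ y, h y ∂μ)))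
    (hmean : Tendsto (fun n => (∑ i, g (x n i)) / n) atTop (𝓝 (∫ y, g y ∂μ)))
    (hk : Tendsto (fun n => (k n : ℝ) / n) atTop (𝓝 0)) :
    Tendsto (fun n => maxSubsetSum (fun i => g (x n i)) (k n) / n) atTop (𝓝 0) := by
  have hbound : ∀ (T : ℕ) n, maxSubsetSum (fun i => g (x n i)) (k n) / n ≤
      (k n / n) * T + ((∑ i, g (x n i)) / n - (∑ i, truncate g hg T (x n i)) / n) := by
    intro T n
    have hsum : maxSubsetSum (fun i => g (x n i)) (k n)
        ≤ k n * T + ∑ i, (g (x n i) - truncate g hg T (x n i)) := by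
      refine maxSubsetSum_le fun A hA => ?_
      have hA' : (#A : ℝ) ≤ k n := by exact_mod_cast hA
      calc ∑ i ∈ A, g (x n i)
          = ∑ i ∈ A, truncate g hg T (x n i)
              + ∑ i ∈ A, (g (x n i) - truncate g hg T (x n i)) := by
            rw [← Finset.sum_add_distrib]; simp
        _ ≤ #A * T + ∑ i, (g (x n i) - truncate g hg T (x n i)) := by
            refine add_le_add ?_ (Finset.sum_le_univ_sum_of_nonneg fun i =>
              sub_nonneg.2 (truncate_le_self (hgx n i) T))
            simpa using Finset.sum_le_card_nsmul A _ _ fun i _ => truncate_le_natCast T (x n i)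
        _ ≤ k n * T + ∑ i, (g (x n i) - truncate g hg T (x n i)) := by gcongr
    rw [Finset.sum_sub_distrib] at hsum
    calc _ ≤ (k n * T + (∑ i, g (x n i) - ∑ i, truncate g hg T (x n i))) / n :=
          div_le_div_of_nonneg_right hsum n.cast_nonneg
      _ = _ := by ring
  refine tendsto_order.2 ⟨fun a ha => Eventually.of_forall fun n =>
    ha.trans_le (div_nonneg (maxSubsetSum_nonneg _ _) n.cast_nonneg), fun ε hε => ?_⟩
  obtain ⟨T, hT⟩ := ((tendsto_integral_truncate hg hgi hgμ).eventually
    (lt_mem_nhds (sub_lt_self _ hε))).exists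
  have hlim := (hk.mul_const (T : ℝ)).add (hmean.sub (hweak (truncate g hg T)))
  rw [zero_mul, zero_add] at hlim
  have hgap : ∫ y, g y ∂μ - ∫ y, truncate g hg T y ∂μ < ε := by linarith
  filter_upwards [hlim.eventually (gt_mem_nhds hgap)] with n hn
  exact (hbound T n).trans_lt hn

lemma integrable_id_of_integrable_pow {μ : Measure ℝ} [IsFiniteMeasure μ] {p : ℕ} (hp : p ≠ 0)
    (h : Integrable (fun x => x ^ p) μ) : Integrable (fun x => x) μ := by
  refine ((integrable_const 1).add h.norm).mono' aestronglyMeasurable_id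
    (Eventually.of_forall fun x => ?_)
  simp only [Pi.add_apply, Real.norm_eq_abs, abs_pow]
  rcases le_total |x| 1 with hx | hx
  · linarith [pow_nonneg (abs_nonneg x) p]
  · linarith [le_self_pow₀ hx hp]

lemma integral_id_pos {μ : Measure ℝ} [NeZero μ] (hpos : ∀ᵐ x ∂μ, 0 < x)
    (hint : Integrable (fun x => x) μ) : 0 < ∫ x, x ∂μ := by
  rw [integral_pos_iff_support_of_nonneg_ae (hpos.mono fun x hx => hx.le) hint]
  refine pos_iff_ne_zero.2 fun h0 => ?_
  obtain ⟨x, hx0, hx⟩ := ((measure_eq_zero_iff_ae_notMem.1 h0).and hpos).exists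
  exact hx0 hx.ne'

end Asymptotics

end SizeBiased

namespace CondC

open SizeBiased

variable {w : ∀ n : ℕ, Fin n → ℝ} {μ : Measure ℝ}

lemma integral_id_pos (hC : CondC w μ) : 0 < ∫ x, x ∂μ :=
  have := hC.isProb
  SizeBiased.integral_id_pos hC.pos (integrable_id_of_integrable_pow three_ne_zero hC.int3)

lemma tendsto_ell_div (hC : CondC w μ) :
    Tendsto (fun n => ell w n / n) atTop (𝓝 (∫ x, x ∂μ)) :=
  tendsto_div_natCast_of_isLittleO
    (hC.ell_asymp.trans_isBigO (natCast_rpow_isBigO_natCast (by norm_num)))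

lemma tendsto_sum_sq_div (hC : CondC w μ) :
    Tendsto (fun n => (∑ i, w n i ^ 2) / n) atTop (𝓝 (∫ x, x ^ 2 ∂μ)) :=
  tendsto_div_natCast_of_isLittleO
    (hC.sq_asymp.trans_isBigO (natCast_rpow_isBigO_natCast (by norm_num)))

lemma tendsto_sum_cube_div (hC : CondC w μ) :
    Tendsto (fun n => (∑ i, w n i ^ 3) / n) atTop (𝓝 (∫ x, x ^ 3 ∂μ)) :=
  tendsto_div_natCast_of_isLittleO (hC.cube_asymp.trans one_isLittleO_natCast)

lemma tendsto_maxSubsetSum_div (hC : CondC w μ) {k : ℕ → ℕ}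
    (hk : Tendsto (fun n => (k n : ℝ) / n) atTop (𝓝 0)) :
    Tendsto (fun n => maxSubsetSum (w n) (k n) / n) atTop (𝓝 0) :=
  tendsto_maxSubsetSum_div_of_sum_sq hk hC.tendsto_sum_sq_div

lemma tendsto_maxSubsetSum_cube_div (hC : CondC w μ) {k : ℕ → ℕ}
    (hk : Tendsto (fun n => (k n : ℝ) / n) atTop (𝓝 0)) :
    Tendsto (fun n => maxSubsetSum (fun i => w n i ^ 3) (k n) / n) atTop (𝓝 0) :=
  tendsto_maxSubsetSum_div_of_weak (g := fun x => x ^ 3) (x := w) (continuous_pow 3)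
    (fun n i => (pow_pos (hC.w_pos n i) 3).le) (hC.pos.mono fun _ hx => (pow_pos hx 3).le)
    hC.int3 hC.weak hC.tendsto_sum_cube_div hk

end CondC

open SizeBiased

/-- Lemma of the paper: `E[w_{v(l)}²] = C + o(1)` for `l = o(n)`. -/
theorem mean_square_size_biased_weight
    (w : ∀ n : ℕ, Fin n → ℝ) (μ : Measure ℝ) (hC : CondC w μ)
    (l : ℕ → ℕ) (hl0 : ∀ n, 1 ≤ l n)
    (hl : (fun n => (l n : ℝ)) =o[atTop] fun n : ℕ => (n : ℝ)) :
    (fun n => (∫ ω, sbW (w n) ω (l n) ^ 2 ∂sbMeasure n (w n)) - Cconst μ) =o[atTop]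
      fun _ : ℕ => (1 : ℝ) := by
  have hl' : Tendsto (fun n => (l n : ℝ) / n) atTop (𝓝 0) := hl.tendsto_div_nhds_zero
  have hk : Tendsto (fun n => ((l n - 1 : ℕ) : ℝ) / n) atTop (𝓝 0) :=
    squeeze_zero (fun n => by positivity)
      (fun n => div_le_div_of_nonneg_right (Nat.cast_le.2 (Nat.sub_le _ _)) n.cast_nonneg) hl'
  have hden : Tendsto (fun n => (ell w n - maxSubsetSum (w n) (l n - 1)) / n) atTop
      (𝓝 (∫ x, x ∂μ)) := by
    simpa [sub_div] using hC.tendsto_ell_div.sub (hC.tendsto_maxSubsetSum_div hk)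
  have hlow : Tendsto (fun n => (∑ i, w n i ^ 3 - maxSubsetSum (fun i => w n i ^ 3) (l n - 1)) /
      ell w n) atTop (𝓝 (Cconst μ)) := by
    simpa [Cconst] using tendsto_div_of_tendsto_div_natCast
      (by simpa [sub_div] using hC.tendsto_sum_cube_div.sub (hC.tendsto_maxSubsetSum_cube_div hk))
      hC.tendsto_ell_div hC.integral_id_pos.ne'
  have hup : Tendsto (fun n => (∑ i, w n i ^ 3) / (ell w n - maxSubsetSum (w n) (l n - 1))) atTop
      (𝓝 (Cconst μ)) :=
    tendsto_div_of_tendsto_div_natCast hC.tendsto_sum_cube_div hden hC.integral_id_pos.ne'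
  have hbounds : ∀ᶠ n in atTop, ∫ ω, sbW (w n) ω (l n) ^ 2 ∂sbMeasure n (w n) ∈
      Set.Icc ((∑ i, w n i ^ 3 - maxSubsetSum (fun i => w n i ^ 3) (l n - 1)) / ell w n)
        ((∑ i, w n i ^ 3) / (ell w n - maxSubsetSum (w n) (l n - 1))) := by
    filter_upwards [hl'.eventually (gt_mem_nhds one_pos),
      hden.eventually (lt_mem_nhds hC.integral_id_pos), eventually_gt_atTop 0] with n hln hpos hn
    have hn' : (0 : ℝ) < n := Nat.cast_pos.2 hn
    exact integral_sbW_sq_mem_Icc (hC.w_pos n) (hl0 n)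
      (by exact_mod_cast ((div_lt_one hn').1 hln).le) ((div_pos_iff_of_pos_right hn').1 hpos)
  rw [isLittleO_one_iff, ← sub_self (Cconst μ)]
  exact (tendsto_of_tendsto_of_tendsto_of_le_of_le' hlow hup (hbounds.mono fun _ h => h.1)
    (hbounds.mono fun _ h => h.2)).sub_const _
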